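/- One-loop loop-tree duality for a massive bubble at the level of energy integration: for real ω₁, ω₂ > 0, real q₀, and δ → 0⁺ understood via distinct lower-half-plane poles, ∫_ℝ dE / [(E² − ω₁² + iδ)((E+q₀)² − ω₂² + iδ)] = −πi·[ 1/(ω₁((ω₁+q₀)² − ω₂² + iδ')) + 1/(ω₂((ω₂−q₀)² − ω₁² + iδ'')) ] + o(1) as δ → 0⁺, where the signs of the infinitesimal imaginary parts δ', δ'' > 0 are both positive (dual prescription), assuming (ω₁+q₀)² ≠ ω₂² and (ω₂−q₀)² ≠ ω₁² so the limit is finite and the o(1) vanishes. -/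

import Mathlib

/-! For `δ > 0` the two propagators factor as `(E - a)(E + a)` and `(E + q₀ - b)(E + q₀ + b)`
with `a = √(ω₁² - iδ)`, `b = √(ω₂² - iδ)` in the lower half-plane. Partial fractions reduce the
energy integral to integrals `∫ dE / ((E - z)(E - w))`, and the antiderivative
`(log (E - z) - log (E - w)) / (z - w)` evaluates these to `πi (sgn Im z - sgn Im w) / (z - w)`:
as `E → -∞` each `log (E - z)` approaches the cut from the side opposite to `z`, picking up
`-πi sgn Im z`. The resulting closed form `πi (a + b) / (a b ((a + b)² - q₀²))` is continuous
at `δ = 0`, and its value there equals the sum of the two dual cuts by a rational identity. -/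

open Real Filter

open Complex MeasureTheory
open scoped Topology

lemma ofReal_sub_ne_zero_of_im_ne_zero {z : ℂ} (hz : z.im ≠ 0) (x : ℝ) : (x : ℂ) - z ≠ 0 :=
  fun h => hz (by simpa using congrArg im h)

lemma exists_pos_mul_one_add_sq_le_norm_ofReal_sub_sq {z : ℂ} (hz : z.im ≠ 0) :
    ∃ c > 0, ∀ x : ℝ, c * (1 + x ^ 2) ≤ ‖(x : ℂ) - z‖ ^ 2 := by
  refine ⟨z.im ^ 2 / (1 + 2 * z.re ^ 2 + 2 * z.im ^ 2), by positivity, fun x => ?_⟩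
  rw [Complex.sq_norm, normSq_apply, div_mul_eq_mul_div, div_le_iff₀ (by positivity)]
  simp only [sub_re, ofReal_re, sub_im, ofReal_im, zero_sub, neg_mul_neg]
  nlinarith [sq_nonneg (x - 2 * z.re), sq_nonneg (z.im * (x - 2 * z.re)),
    sq_nonneg (z.im * (x - z.re)), sq_nonneg z.im, sq_nonneg z.re, sq_nonneg x]

lemma integrable_inv_ofReal_sub_mul_ofReal_sub {z w : ℂ} (hz : z.im ≠ 0) (hw : w.im ≠ 0) :
    Integrable fun x : ℝ => (((x : ℂ) - z) * ((x : ℂ) - w))⁻¹ := by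
  obtain ⟨cz, hcz, hz_le⟩ := exists_pos_mul_one_add_sq_le_norm_ofReal_sub_sq hz
  obtain ⟨cw, hcw, hw_le⟩ := exists_pos_mul_one_add_sq_le_norm_ofReal_sub_sq hw
  have hcont : Continuous fun x : ℝ => (((x : ℂ) - z) * ((x : ℂ) - w))⁻¹ :=
    Continuous.inv₀ (by fun_prop) fun x =>
      mul_ne_zero (ofReal_sub_ne_zero_of_im_ne_zero hz x) (ofReal_sub_ne_zero_of_im_ne_zero hw x)
  refine (integrable_inv_one_add_sq.const_mul (√(cz * cw))⁻¹).mono' hcont.aestronglyMeasurable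
    (ae_of_all _ fun x => ?_)
  have hlow : √(cz * cw) * (1 + x ^ 2) ≤ ‖(x : ℂ) - z‖ * ‖(x : ℂ) - w‖ := by
    refine (pow_le_pow_iff_left₀ (by positivity) (by positivity) two_ne_zero).mp ?_
    calc (√(cz * cw) * (1 + x ^ 2)) ^ 2 = cz * (1 + x ^ 2) * (cw * (1 + x ^ 2)) := by
          rw [mul_pow, sq_sqrt (by positivity)]; ring
      _ ≤ ‖(x : ℂ) - z‖ ^ 2 * ‖(x : ℂ) - w‖ ^ 2 :=
          mul_le_mul (hz_le x) (hw_le x) (by positivity) (by positivity)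
      _ = _ := by ring
  rw [norm_inv, norm_mul, ← mul_inv]
  exact inv_anti₀ (by positivity) hlow

lemma hasDerivAt_log_ofReal_sub {z : ℂ} (hz : z.im ≠ 0) (x : ℝ) :
    HasDerivAt (fun y : ℝ => log ((y : ℂ) - z)) ((x : ℂ) - z)⁻¹ x := by
  have hslit : (x : ℂ) - z ∈ slitPlane := mem_slitPlane_iff.mpr (Or.inr (by simpa using hz))
  simpa [one_div] using (((hasDerivAt_id x).ofReal_comp).sub_const z).clog_real hslit

lemma tendsto_log_ofReal_sub_sub_log_atTop (z : ℂ) :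
    Tendsto (fun x : ℝ => log ((x : ℂ) - z) - Real.log x) atTop (𝓝 0) := by
  have hinv : Tendsto (fun x : ℝ => 1 - z / x) atTop (𝓝 1) := by
    simpa [div_eq_mul_inv] using tendsto_const_nhds.sub
      (tendsto_inv₀_cobounded.comp (RCLike.tendsto_ofReal_atTop_cobounded ℂ) |>.const_mul z)
  have hlog : Tendsto (fun x : ℝ => log (1 - z / x)) atTop (𝓝 0) := by
    simpa [Function.comp_def] using (continuousAt_clog (by simp)).tendsto.comp hinv
  refine hlog.congr' ?_
  filter_upwards [eventually_gt_atTop 0, hinv.eventually_ne one_ne_zero] with x hx hne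
  have hx' : (x : ℂ) ≠ 0 := ofReal_ne_zero.mpr hx.ne'
  rw [show (x : ℂ) - z = x * (1 - z / x) by field_simp, log_ofReal_mul hx hne]
  ring

lemma tendsto_log_ofReal_sub_sub_log_neg_atBot {z : ℂ} (hz : z.im ≠ 0) :
    Tendsto (fun x : ℝ => log ((x : ℂ) - z) - Real.log (-x)) atBot
      (𝓝 (-(Real.sign z.im) * π * I)) := by
  have hinv : Tendsto (fun x : ℝ => z / x - 1) atBot (𝓝 (-1)) := by
    simpa [div_eq_mul_inv] using (tendsto_inv₀_cobounded.comp
      (RCLike.tendsto_ofReal_atBot_cobounded ℂ) |>.const_mul z).sub_const 1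
  have him : ∀ x : ℝ, (z / x - 1).im = z.im / x := fun x => by simp
  have hlog : Tendsto (fun x : ℝ => log (z / x - 1)) atBot (𝓝 (-(Real.sign z.im) * π * I)) := by
    rcases hz.lt_or_gt with hneg | hpos
    · have hwithin : Tendsto (fun x : ℝ => z / x - 1) atBot (𝓝[{u | 0 ≤ u.im}] (-1)) :=
        tendsto_nhdsWithin_of_tendsto_nhds_of_eventually_within _ hinv <| by
          filter_upwards [eventually_lt_atBot 0] with x hx
          simpa [him] using (div_pos_of_neg_of_neg hneg hx).le
      simpa [Real.sign_of_neg hneg, Function.comp_def] using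
        (tendsto_log_nhdsWithin_im_nonneg_of_re_neg_of_im_zero (by simp) (by simp)).comp hwithin
    · have hwithin : Tendsto (fun x : ℝ => z / x - 1) atBot (𝓝[{u | u.im < 0}] (-1)) :=
        tendsto_nhdsWithin_of_tendsto_nhds_of_eventually_within _ hinv <| by
          filter_upwards [eventually_lt_atBot 0] with x hx
          simpa [him] using div_neg_of_pos_of_neg hpos hx
      simpa [Real.sign_of_pos hpos, Function.comp_def, sub_eq_add_neg] using
        (tendsto_log_nhdsWithin_im_neg_of_re_neg_of_im_zero (by simp) (by simp)).comp hwithin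
  refine hlog.congr' ?_
  filter_upwards [eventually_lt_atBot 0, hinv.eventually_ne (by norm_num : (-1 : ℂ) ≠ 0)]
    with x hx hne
  have hx' : (x : ℂ) ≠ 0 := ofReal_ne_zero.mpr hx.ne
  rw [show (x : ℂ) - z = ((-x : ℝ) : ℂ) * (z / x - 1) by push_cast; field_simp; ring,
    log_ofReal_mul (neg_pos.mpr hx) hne]
  ring

theorem integral_inv_ofReal_sub_mul_ofReal_sub {z w : ℂ} (hz : z.im ≠ 0) (hw : w.im ≠ 0) :
    ∫ x : ℝ, (((x : ℂ) - z) * ((x : ℂ) - w))⁻¹ =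
      π * I * (Real.sign z.im - Real.sign w.im) / (z - w) := by
  have hint := integrable_inv_ofReal_sub_mul_ofReal_sub hz hw
  rcases eq_or_ne z w with rfl | hzw
  · have hderiv (x : ℝ) : HasDerivAt (fun y : ℝ => -((y : ℂ) - z)⁻¹)
        (((x : ℂ) - z) * ((x : ℂ) - z))⁻¹ x := by
      refine (((hasDerivAt_id x).ofReal_comp.sub_const z).inv
        (ofReal_sub_ne_zero_of_im_ne_zero hz x)).neg.congr_deriv ?_
      simp only [id, ofReal_one, neg_div, neg_neg, one_div, sq]
    have hlim (l : Filter ℝ) (hl : Tendsto (fun x : ℝ => (x : ℂ)) l (Bornology.cobounded ℂ)) :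
        Tendsto (fun y : ℝ => -((y : ℂ) - z)⁻¹) l (𝓝 0) := by
      simpa using (tendsto_inv₀_cobounded.comp ((tendsto_sub_const_cobounded z).comp hl)).neg
    rw [integral_of_hasDerivAt_of_tendsto hderiv hint
      (hlim _ (RCLike.tendsto_ofReal_atBot_cobounded ℂ))
      (hlim _ (RCLike.tendsto_ofReal_atTop_cobounded ℂ))]
    simp
  · set F : ℝ → ℂ := fun y => (log ((y : ℂ) - z) - log ((y : ℂ) - w)) / (z - w)
    have hderiv (x : ℝ) : HasDerivAt F (((x : ℂ) - z) * ((x : ℂ) - w))⁻¹ x := by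
      refine (((hasDerivAt_log_ofReal_sub hz x).sub
        (hasDerivAt_log_ofReal_sub hw x)).div_const (z - w)).congr_deriv ?_
      have := ofReal_sub_ne_zero_of_im_ne_zero hz x
      have := ofReal_sub_ne_zero_of_im_ne_zero hw x
      field_simp
      ring
    have htop : Tendsto F atTop (𝓝 0) := by
      simpa using ((tendsto_log_ofReal_sub_sub_log_atTop z).sub
        (tendsto_log_ofReal_sub_sub_log_atTop w)).div_const (z - w)
    have hbot : Tendsto F atBot
        (𝓝 ((-(Real.sign z.im) * π * I - -(Real.sign w.im) * π * I) / (z - w))) := by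
      simpa using ((tendsto_log_ofReal_sub_sub_log_neg_atBot hz).sub
        (tendsto_log_ofReal_sub_sub_log_neg_atBot hw)).div_const (z - w)
    rw [integral_of_hasDerivAt_of_tendsto hderiv hint hbot htop]
    ring

theorem integral_inv_bubble {a b : ℂ} (ha : a.im < 0) (hb : b.im < 0) (q : ℝ) :
    ∫ x : ℝ, (((x : ℂ) ^ 2 - a ^ 2) * (((x : ℂ) + q) ^ 2 - b ^ 2))⁻¹ =
      π * I * (a + b) / (a * b * ((a + b) ^ 2 - q ^ 2)) := by
  set g : ℂ → ℂ → ℝ → ℂ := fun z w x => (((x : ℂ) - z) * ((x : ℂ) - w))⁻¹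
  have ha' : 0 < (-a).im := by simpa using ha
  have hb' : (b - q).im < 0 := by simpa using hb
  have hb'' : 0 < (-b - q).im := by simpa using hb
  have hne {c : ℂ} (hc : c.im < 0) : c ≠ 0 := fun h => by simp [h] at hc
  have hsum : a + b + q ≠ 0 := hne (by simpa using add_neg ha hb)
  have hdiff : a + b - q ≠ 0 := hne (by simpa using add_neg ha hb)
  have := hne ha
  have := hne hb
  have hsplit : (fun x : ℝ => (((x : ℂ) ^ 2 - a ^ 2) * (((x : ℂ) + q) ^ 2 - b ^ 2))⁻¹) =
      fun x => (g a (b - q) - g a (-b - q) - (g (-a) (b - q) - g (-a) (-b - q))) x /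
        (4 * a * b) := by
    funext x
    have := ofReal_sub_ne_zero_of_im_ne_zero ha.ne x
    have := ofReal_sub_ne_zero_of_im_ne_zero ha'.ne' x
    have := ofReal_sub_ne_zero_of_im_ne_zero hb'.ne x
    have := ofReal_sub_ne_zero_of_im_ne_zero hb''.ne' x
    simp only [g, Pi.sub_apply]
    rw [show (x : ℂ) ^ 2 - a ^ 2 = (x - a) * (x - -a) by ring,
      show ((x : ℂ) + q) ^ 2 - b ^ 2 = (x - (b - q)) * (x - (-b - q)) by ring]
    field_simp
    ring
  have hint {z w : ℂ} (hz : z.im ≠ 0) (hw : w.im ≠ 0) : Integrable (g z w) :=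
    integrable_inv_ofReal_sub_mul_ofReal_sub hz hw
  rw [hsplit, integral_div,
    integral_sub' ((hint ha.ne hb'.ne).sub (hint ha.ne hb''.ne'))
      ((hint ha'.ne' hb'.ne).sub (hint ha'.ne' hb''.ne')),
    integral_sub' (hint ha.ne hb'.ne) (hint ha.ne hb''.ne'),
    integral_sub' (hint ha'.ne' hb'.ne) (hint ha'.ne' hb''.ne')]
  simp only [g, integral_inv_ofReal_sub_mul_ofReal_sub ha.ne hb'.ne,
    integral_inv_ofReal_sub_mul_ofReal_sub ha.ne hb''.ne',
    integral_inv_ofReal_sub_mul_ofReal_sub ha'.ne' hb'.ne,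
    integral_inv_ofReal_sub_mul_ofReal_sub ha'.ne' hb''.ne']
  rw [Real.sign_of_neg ha, Real.sign_of_pos ha', Real.sign_of_neg hb', Real.sign_of_pos hb'',
    show a - (-b - q) = a + b + q by ring, show -a - (b - q) = -(a + b - q) by ring]
  have hsq : (a + b) ^ 2 - q ^ 2 ≠ 0 := by
    rw [show (a + b) ^ 2 - q ^ 2 = (a + b + q) * (a + b - q) by ring]
    exact mul_ne_zero hsum hdiff
  push_cast
  field_simp
  ring

lemma Complex.sq_sqrt (c : ℂ) : Complex.sqrt c ^ 2 = c :=
  cpow_ofNat_inv_pow c 2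

lemma Complex.im_sqrt_neg_of_im_neg {c : ℂ} (hc : c.im < 0) : (Complex.sqrt c).im < 0 := by
  rw [Complex.sqrt, cpow_inv_two_im_eq_neg_sqrt hc, neg_lt_zero, Real.sqrt_pos]
  linarith [(abs_re_lt_norm.mpr hc.ne).trans_le' (le_abs_self c.re)]

lemma tendsto_sqrt_sq_sub_I_mul_nhdsGT {ω : ℝ} (hω : 0 < ω) :
    Tendsto (fun δ : ℝ => Complex.sqrt (ω ^ 2 - I * δ)) (𝓝[>] 0) (𝓝 ω) := by
  have hsqrt : Complex.sqrt ((ω : ℂ) ^ 2) = ω := by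
    rw [← ofReal_pow, Complex.sqrt_of_nonneg (by exact_mod_cast (sq_nonneg ω)), ofReal_re,
      Real.sqrt_sq hω.le]
  have hcont : ContinuousAt (fun δ : ℝ => Complex.sqrt (ω ^ 2 - I * δ)) 0 :=
    (continuousAt_sqrt (z := (ω : ℂ) ^ 2) (Or.inl (by rw [← ofReal_pow, ofReal_re]; positivity)))
      |>.comp_of_eq (by fun_prop) (by simp)
  simpa [hsqrt] using hcont.tendsto.mono_left nhdsWithin_le_nhds

lemma add_sq_ne_sq_of_add_sq_ne_of_sub_sq_ne {K : Type*} [Field K] {ω₁ ω₂ q : K}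
    (h₁ : (ω₁ + q) ^ 2 ≠ ω₂ ^ 2) (h₂ : (ω₂ - q) ^ 2 ≠ ω₁ ^ 2) : (ω₁ + ω₂) ^ 2 ≠ q ^ 2 := by
  rw [← sub_ne_zero, show (ω₁ + ω₂) ^ 2 - q ^ 2 = (ω₁ + ω₂ + q) * (ω₁ + ω₂ - q) by ring]
  refine mul_ne_zero (fun h => h₁ ?_) (fun h => h₂ ?_)
  · rw [show ω₁ + q = -ω₂ by linear_combination h]; ring
  · rw [show ω₂ - q = -ω₁ by linear_combination h]; ring

theorem inv_add_inv_dual_cuts {K : Type*} [Field K] {ω₁ ω₂ q : K} (hω₁ : ω₁ ≠ 0) (hω₂ : ω₂ ≠ 0)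
    (h₁ : (ω₁ + q) ^ 2 ≠ ω₂ ^ 2) (h₂ : (ω₂ - q) ^ 2 ≠ ω₁ ^ 2) :
    (ω₁ * ((ω₁ + q) ^ 2 - ω₂ ^ 2))⁻¹ + (ω₂ * ((ω₂ - q) ^ 2 - ω₁ ^ 2))⁻¹ =
      -((ω₁ + ω₂) / (ω₁ * ω₂ * ((ω₁ + ω₂) ^ 2 - q ^ 2))) := by
  have hfac₁ : (ω₁ + q) ^ 2 - ω₂ ^ 2 = (ω₁ - ω₂ + q) * (ω₁ + ω₂ + q) := by ring
  have hfac₂ : (ω₂ - q) ^ 2 - ω₁ ^ 2 = -((ω₁ - ω₂ + q) * (ω₁ + ω₂ - q)) := by ring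
  have hfac : (ω₁ + ω₂) ^ 2 - q ^ 2 = (ω₁ + ω₂ + q) * (ω₁ + ω₂ - q) := by ring
  rw [← sub_ne_zero, hfac₁, mul_ne_zero_iff] at h₁
  rw [← sub_ne_zero, hfac₂, neg_ne_zero, mul_ne_zero_iff] at h₂
  rw [hfac₁, hfac₂, hfac]
  field_simp [h₁.1, h₁.2, h₂.2]
  ring

lemma tendsto_add_I_mul_nhdsGT (c : ℂ) :
    Tendsto (fun δ : ℝ => c + I * δ) (𝓝[>] 0) (𝓝 c) := by
  have : ContinuousAt (fun δ : ℝ => c + I * δ) 0 := by fun_prop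
  simpa using this.tendsto.mono_left nhdsWithin_le_nhds

theorem tendsto_integral_inv_bubble {ω₁ ω₂ : ℝ} (hω₁ : 0 < ω₁) (hω₂ : 0 < ω₂) (q : ℝ)
    (hq : (ω₁ + ω₂) ^ 2 ≠ q ^ 2) :
    Tendsto (fun δ : ℝ => ∫ x : ℝ,
        (((x : ℂ) ^ 2 - (ω₁ : ℂ) ^ 2 + I * δ) * (((x : ℂ) + q) ^ 2 - (ω₂ : ℂ) ^ 2 + I * δ))⁻¹)
      (𝓝[>] 0) (𝓝 (π * I * (ω₁ + ω₂) / (ω₁ * ω₂ * ((ω₁ + ω₂) ^ 2 - q ^ 2)))) := by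
  have ha := tendsto_sqrt_sq_sub_I_mul_nhdsGT hω₁
  have hb := tendsto_sqrt_sq_sub_I_mul_nhdsGT hω₂
  have hden : (ω₁ : ℂ) * ω₂ * ((ω₁ + ω₂) ^ 2 - q ^ 2) ≠ 0 := by
    refine mul_ne_zero (mul_ne_zero ?_ ?_) (sub_ne_zero.mpr ?_)
    · exact ofReal_ne_zero.mpr hω₁.ne'
    · exact ofReal_ne_zero.mpr hω₂.ne'
    · exact_mod_cast hq
  refine (((ha.add hb).const_mul _).div ((ha.mul hb).mul (((ha.add hb).pow 2).sub_const _))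
    hden).congr' ?_
  filter_upwards [self_mem_nhdsWithin] with δ hδ
  have him (ω : ℝ) : (ω ^ 2 - I * δ : ℂ).im < 0 := by simpa [← ofReal_pow] using hδ
  rw [Pi.div_apply, ← integral_inv_bubble (Complex.im_sqrt_neg_of_im_neg (him ω₁))
    (Complex.im_sqrt_neg_of_im_neg (him ω₂)), Complex.sq_sqrt, Complex.sq_sqrt]
  congr 1 with x
  ring

theorem tendsto_dual_cuts {ω₁ ω₂ q : ℝ} (hω₁ : 0 < ω₁) (hω₂ : 0 < ω₂)
    (h₁ : (ω₁ + q) ^ 2 ≠ ω₂ ^ 2) (h₂ : (ω₂ - q) ^ 2 ≠ ω₁ ^ 2) :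
    Tendsto (fun δ' : ℝ => -((π : ℂ) * I) *
        (((ω₁ : ℂ) * (((ω₁ : ℂ) + q) ^ 2 - (ω₂ : ℂ) ^ 2 + I * δ'))⁻¹ +
         ((ω₂ : ℂ) * (((ω₂ : ℂ) - q) ^ 2 - (ω₁ : ℂ) ^ 2 + I * δ'))⁻¹))
      (𝓝[>] 0) (𝓝 (π * I * (ω₁ + ω₂) / (ω₁ * ω₂ * ((ω₁ + ω₂) ^ 2 - q ^ 2)))) := by
  have hω₁' : (ω₁ : ℂ) ≠ 0 := ofReal_ne_zero.mpr hω₁.ne'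
  have hω₂' : (ω₂ : ℂ) ≠ 0 := ofReal_ne_zero.mpr hω₂.ne'
  have h₁' : ((ω₁ : ℂ) + q) ^ 2 ≠ (ω₂ : ℂ) ^ 2 := by exact_mod_cast h₁
  have h₂' : ((ω₂ : ℂ) - q) ^ 2 ≠ (ω₁ : ℂ) ^ 2 := by exact_mod_cast h₂
  have h := (((tendsto_add_I_mul_nhdsGT (((ω₁ : ℂ) + q) ^ 2 - (ω₂ : ℂ) ^ 2)).const_mul
      (ω₁ : ℂ)).inv₀ (mul_ne_zero hω₁' (sub_ne_zero.mpr h₁'))).add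
    (((tendsto_add_I_mul_nhdsGT (((ω₂ : ℂ) - q) ^ 2 - (ω₁ : ℂ) ^ 2)).const_mul
      (ω₂ : ℂ)).inv₀ (mul_ne_zero hω₂' (sub_ne_zero.mpr h₂'))) |>.const_mul (-((π : ℂ) * I))
  rw [inv_add_inv_dual_cuts hω₁' hω₂' h₁' h₂'] at h
  convert h using 2
  ring

/-- one-loop loop-tree duality for the massive bubble at the level of the
energy integration.  For `ω₁, ω₂ > 0` and real `q₀` with `(ω₁+q₀)² ≠ ω₂²` and
`(ω₂−q₀)² ≠ ω₁²`, as `δ → 0⁺` the energy integral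
`∫_ℝ dE / [(E² − ω₁² + iδ)((E+q₀)² − ω₂² + iδ)]` tends to the common limit `L` of the
dual-cut expression
`−πi [ 1/(ω₁((ω₁+q₀)² − ω₂² + iδ')) + 1/(ω₂((ω₂−q₀)² − ω₁² + iδ')) ]` as `δ' → 0⁺`
(both infinitesimal imaginary parts positive: the dual prescription). -/
theorem bubble_loop_tree_duality (ω₁ ω₂ q₀ : ℝ) (hω₁ : 0 < ω₁) (hω₂ : 0 < ω₂)
    (h₁ : (ω₁ + q₀) ^ 2 ≠ ω₂ ^ 2) (h₂ : (ω₂ - q₀) ^ 2 ≠ ω₁ ^ 2) :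
    ∃ L : ℂ,
      Tendsto (fun δ : ℝ => ∫ x : ℝ,
          ((((x : ℂ) ^ 2 - (ω₁ : ℂ) ^ 2 + Complex.I * δ) *
            (((x : ℂ) + q₀) ^ 2 - (ω₂ : ℂ) ^ 2 + Complex.I * δ)))⁻¹)
        (nhdsWithin 0 (Set.Ioi 0)) (nhds L) ∧
      Tendsto (fun δ' : ℝ => -((π : ℂ) * Complex.I) *
          (((ω₁ : ℂ) * (((ω₁ : ℂ) + q₀) ^ 2 - (ω₂ : ℂ) ^ 2 + Complex.I * δ'))⁻¹ +
           ((ω₂ : ℂ) * (((ω₂ : ℂ) - q₀) ^ 2 - (ω₁ : ℂ) ^ 2 + Complex.I * δ'))⁻¹))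
        (nhdsWithin 0 (Set.Ioi 0)) (nhds L) :=
  ⟨_, tendsto_integral_inv_bubble hω₁ hω₂ q₀ (add_sq_ne_sq_of_add_sq_ne_of_sub_sq_ne h₁ h₂),
    tendsto_dual_cuts hω₁ hω₂ h₁ h₂⟩
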